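/- Let S be an evenly intersticed double occurrence word, i.e., between the two occurrences of any symbol there is a word of even length. After performing any sequence of splitting operations on S, at every stage the following invariant holds: for any pair of already-split symbols P, P̄, the number of occurrences of unsplit symbols strictly between P and P̄ is even if and only if P and P̄ have opposite orientations. In particular, in the fully split word S*, every pair of split symbols has opposite orientations. -/

import Mathlib

/-!
Mark every letter with its symbol and with the parity of (number of unsplit letters before it)
+ (its bar); the invariant is that no two letters carry the same mark. For the initial word this
is the even-interstice condition. Splitting `α p β p γ` reverses and toggles `β`, which replaces
the marks of `β` by their reverse shifted by (number of unsplit letters of `β`) + 1. That number is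
even by the invariant for the two `p`s, so the marks of `β` are only permuted, while `P` and `P̄`
inherit the parities of the two `p`s. For a split pair `P, P̄`, distinct marks is exactly the
claimed parity relation.
-/

/-- A letter is either an unsplit symbol (from `A`) or a split symbol (from `B`) carrying
an orientation bit (`true` = barred). -/
abbrev Letter (A B : Type) := A ⊕ (B × Bool)

/-- Toggle the orientation (bar) of a split symbol; unsplit symbols are unchanged. -/
def toggle {A B : Type} : Letter A B → Letter A B
  | .inl a => .inl a
  | .inr (P, b) => .inr (P, !b)

/-- Splitting at an unsplit symbol `p`: replace `S = α p β p γ` by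
`α P β⁻¹ P̄ γ`, where `β⁻¹` is `β` reversed with the orientations of previously split
symbols toggled, and `P` is a fresh split symbol (its two new occurrences carrying
opposite orientations). -/
def SplitStep {A B : Type} (S T : List (Letter A B)) : Prop :=
  ∃ (α β γ : List (Letter A B)) (p : A) (P : B),
    (∀ b : Bool, Sum.inr (P, b) ∉ S) ∧
    S = α ++ .inl p :: β ++ .inl p :: γ ∧
    T = α ++ .inr (P, false) :: (β.reverse.map toggle) ++ .inr (P, true) :: γ

theorem List.exists_eq_append_getElem_cons_append_getElem_cons {α : Type*} (l : List α) {i j : ℕ}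
    (hij : i < j) (hj : j < l.length) :
    ∃ u v w, l = u ++ l[i] :: v ++ l[j] :: w ∧ v.length = j - i - 1 := by
  obtain ⟨d, rfl⟩ : ∃ d, j = i + 1 + d := ⟨j - i - 1, by omega⟩
  refine ⟨l.take i, (l.drop (i + 1)).take d, l.drop (i + 1 + d + 1), ?_,
    by simp only [List.length_take, List.length_drop]; omega⟩
  have hmid : l.drop (i + 1) = (l.drop (i + 1)).take d ++ (l.drop (i + 1)).drop d :=
    (List.take_append_drop _ _).symm
  rw [List.drop_drop, List.drop_eq_getElem_cons hj] at hmid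
  conv_lhs => rw [← List.take_append_drop i l, List.drop_eq_getElem_cons (by omega), hmid]
  simp

theorem List.Nodup.ne_of_append_cons_append_cons {α : Type*} {l₁ l₂ l₃ : List α} {a b : α}
    (h : (l₁ ++ a :: l₂ ++ b :: l₃).Nodup) : a ≠ b := by
  rintro rfl
  simp [List.nodup_append] at h

theorem List.Nodup.replace_pair_reverse {α : Type*} {l₁ l₂ l₃ : List α} {a b a' b' : α}
    (h : (l₁ ++ a :: l₂ ++ b :: l₃).Nodup) (ha' : a' ∉ l₁ ++ l₂ ++ l₃) (hb' : b' ∉ l₁ ++ l₂ ++ l₃)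
    (hab' : a' ≠ b') : (l₁ ++ a' :: l₂.reverse ++ b' :: l₃).Nodup := by
  simp only [List.append_assoc, List.cons_append, List.nodup_append, List.nodup_cons,
    List.mem_append, List.mem_cons, List.mem_reverse, List.nodup_reverse, not_or, ne_eq] at h ha' hb' ⊢
  grind

theorem ZMod.two_ne_iff_eq_add_one (x y : ZMod 2) : x ≠ y ↔ x = y + 1 := by
  revert x y; decide

namespace Splitting

variable {A B : Type}

def symbol : Letter A B → A ⊕ B
  | .inl a => .inl a
  | .inr (P, _) => .inr P

def bar : Letter A B → ZMod 2
  | .inl _ => 0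
  | .inr (_, b) => if b then 1 else 0

def weight (x : Letter A B) : ZMod 2 := if x.isLeft then 1 else 0

-- The letter at position `k` of `L` gets the mark
-- `(its symbol, c + #(unsplit letters of L.take k) + its bar)`; the offset `c` makes `marks` additive.
def marks (c : ZMod 2) : List (Letter A B) → List ((A ⊕ B) × ZMod 2)
  | [] => []
  | x :: L => (symbol x, c + bar x) :: marks (c + weight x) L

@[simp] lemma symbol_toggle (x : Letter A B) : symbol (toggle x) = symbol x := by
  rcases x with a | ⟨P, b⟩ <;> rfl

@[simp] lemma isLeft_toggle (x : Letter A B) : (toggle x).isLeft = x.isLeft := by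
  rcases x with a | ⟨P, b⟩ <;> rfl

lemma bar_toggle (x : Letter A B) : bar (toggle x) = bar x + weight x + 1 := by
  rcases x with a | ⟨P, _ | _⟩ <;> simp [bar, toggle, weight] <;> decide

lemma cast_countP_isLeft_cons (x : Letter A B) (l : List (Letter A B)) :
    ((x :: l).countP (·.isLeft) : ZMod 2) = weight x + l.countP (·.isLeft) := by
  rw [List.countP_cons, weight]; split_ifs <;> push_cast <;> ring

lemma marks_append (c : ZMod 2) (u v : List (Letter A B)) :
    marks c (u ++ v) = marks c u ++ marks (c + u.countP (·.isLeft)) v := by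
  induction u generalizing c with
  | nil => simp [marks]
  | cons x u ih => simp only [List.cons_append, marks, ih, cast_countP_isLeft_cons, add_assoc]

lemma map_fst_marks (c : ZMod 2) (L : List (Letter A B)) :
    (marks c L).map Prod.fst = L.map symbol := by
  induction L generalizing c with
  | nil => rfl
  | cons x L ih => simp [marks, ih]

lemma marks_reverse_map_toggle (c : ZMod 2) (l : List (Letter A B)) :
    marks c (l.reverse.map toggle) = (marks (c + l.countP (·.isLeft) + 1) l).reverse := by
  induction l with
  | nil => rfl
  | cons x l ih =>
    simp only [List.reverse_cons, List.map_append, List.map_cons, List.map_nil, marks_append, ih,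
      marks, List.countP_map, Function.comp_def, isLeft_toggle, List.countP_reverse,
      cast_countP_isLeft_cons, bar_toggle, symbol_toggle]
    have hw : c + (weight x + l.countP (·.isLeft)) + 1 + weight x = c + l.countP (·.isLeft) + 1 := by
      grind
    rw [hw]
    congr 3
    ring

lemma marks_append_cons_append_cons (c : ZMod 2) (α β γ : List (Letter A B)) (x y : Letter A B) :
    marks c (α ++ x :: β ++ y :: γ) =
      marks c α ++ (symbol x, c + α.countP (·.isLeft) + bar x) ::
        marks (c + α.countP (·.isLeft) + weight x) β ++
        (symbol y, c + α.countP (·.isLeft) + weight x + β.countP (·.isLeft) + bar y) ::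
        marks (c + α.countP (·.isLeft) + weight x + β.countP (·.isLeft) + weight y) γ := by
  simp only [List.append_assoc, List.cons_append, marks_append, marks]

lemma inr_not_mem_marks (c : ZMod 2) {L : List (Letter A B)} {P : B}
    (hP : ∀ b : Bool, Sum.inr (P, b) ∉ L) (b : ZMod 2) : (Sum.inr P, b) ∉ marks c L := by
  intro h
  obtain ⟨x, hx, hxP⟩ := List.mem_map.1 (map_fst_marks c L ▸ List.mem_map_of_mem (f := Prod.fst) h)
  rcases x with a | ⟨Q, b'⟩
  · cases hxP
  · cases hxP
    exact hP b' hx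

lemma nodup_marks_of_splitStep {c : ZMod 2} {S T : List (Letter A B)} (h : SplitStep S T)
    (hS : (marks c S).Nodup) : (marks c T).Nodup := by
  obtain ⟨α, β, γ, p, P, hP, rfl, rfl⟩ := h
  rw [marks_append_cons_append_cons] at hS ⊢
  have hβ : (β.countP (·.isLeft) : ZMod 2) = 0 := by
    have hne := hS.ne_of_append_cons_append_cons
    simp only [bar, weight, Sum.isLeft_inl, if_true, add_zero, ne_eq, Prod.mk.injEq, true_and] at hne
    have := (ZMod.two_ne_iff_eq_add_one _ _).1 hne
    grind
  have h11 : (1 + 1 : ZMod 2) = 0 := rfl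
  simp only [marks_reverse_map_toggle, List.countP_reverse, List.countP_map, Function.comp_def,
    isLeft_toggle, hβ, bar, weight, symbol, Sum.isLeft_inl, Sum.isLeft_inr, Bool.false_eq_true,
    if_true, if_false, add_zero, add_assoc, h11] at hS ⊢
  simp only [List.mem_append, List.mem_cons, not_or] at hP
  have hPα := fun c' => inr_not_mem_marks c' fun b => (hP b).1.1
  have hPβ := fun c' => inr_not_mem_marks c' fun b => (hP b).1.2.2
  have hPγ := fun c' => inr_not_mem_marks c' fun b => (hP b).2.2
  exact hS.replace_pair_reverse (by simp [hPα, hPβ, hPγ]) (by simp [hPα, hPβ, hPγ]) (by simp)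

lemma length_marks (c : ZMod 2) (L : List (Letter A B)) : (marks c L).length = L.length := by
  simpa using congrArg List.length (map_fst_marks c L)

lemma getElem?_marks_map_inl (c : ZMod 2) (l : List A) (k : ℕ) :
    (marks c (l.map Sum.inl : List (Letter A B)))[k]? = l[k]?.map fun a => (Sum.inl a, c + k) := by
  induction l generalizing c k with
  | nil => rfl
  | cons a l ih =>
    cases k with
    | zero => simp [marks, symbol, bar]
    | succ k => simp [marks, weight, ih, add_comm, add_left_comm]

lemma nodup_marks_map_inl (c : ZMod 2) {S0 : List A}
    (heven : ∀ (α β γ : List A) (a : A), S0 = α ++ a :: β ++ a :: γ → Even β.length) :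
    (marks c (S0.map Sum.inl : List (Letter A B))).Nodup := by
  rw [List.nodup_iff_getElem?_ne_getElem?]
  intro i j hij hj heq
  rw [length_marks, List.length_map] at hj
  rw [getElem?_marks_map_inl, getElem?_marks_map_inl, List.getElem?_eq_getElem (by omega),
    List.getElem?_eq_getElem hj] at heq
  simp only [Option.map_some, Option.some.injEq, Prod.mk.injEq, Sum.inl.injEq, add_right_inj] at heq
  obtain ⟨u, v, w, hS, hv⟩ := S0.exists_eq_append_getElem_cons_append_getElem_cons hij hj
  rw [heq.1] at hS
  obtain ⟨r, hr⟩ := heven _ _ _ _ hS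
  have := (ZMod.natCast_eq_natCast_iff' i j 2).1 heq.2
  omega

lemma even_countP_isLeft_iff_of_nodup_marks {c : ZMod 2} {α β γ : List (Letter A B)} {P : B}
    {b₁ b₂ : Bool} (h : (marks c (α ++ .inr (P, b₁) :: β ++ .inr (P, b₂) :: γ)).Nodup) :
    Even (β.countP fun l => l.isLeft) ↔ b₁ ≠ b₂ := by
  rw [marks_append_cons_append_cons] at h
  have hne := h.ne_of_append_cons_append_cons
  simp only [symbol, bar, weight, Sum.isLeft_inr, Bool.false_eq_true, if_false, add_zero, ne_eq,
    Prod.mk.injEq, true_and] at hne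
  have hβ : (β.countP (·.isLeft) : ZMod 2) = (if b₁ then 1 else 0) + (if b₂ then 1 else 0) + 1 := by
    have := (ZMod.two_ne_iff_eq_add_one _ _).1 hne
    grind
  rw [← ZMod.natCast_eq_zero_iff_even, hβ]
  cases b₁ <;> cases b₂ <;> decide

end Splitting

theorem stmt6_general {A B : Type} (S0 : List A)
    (heven : ∀ (α β γ : List A) (a : A), S0 = α ++ a :: β ++ a :: γ → Even β.length)
    (T : List (Letter A B))
    (hT : Relation.ReflTransGen SplitStep (S0.map Sum.inl) T) :
    (∀ (α β γ : List (Letter A B)) (P : B) (b₁ b₂ : Bool),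
      T = α ++ .inr (P, b₁) :: β ++ .inr (P, b₂) :: γ →
      (Even (β.countP fun l => l.isLeft) ↔ b₁ ≠ b₂)) ∧
    ((∀ l ∈ T, l.isRight = true) →
      ∀ (α β γ : List (Letter A B)) (P : B) (b₁ b₂ : Bool),
        T = α ++ .inr (P, b₁) :: β ++ .inr (P, b₂) :: γ → b₁ ≠ b₂) := by
  have hinv : (Splitting.marks 0 T).Nodup := by
    induction hT with
    | refl => exact Splitting.nodup_marks_map_inl 0 heven
    | tail _ hstep ih => exact Splitting.nodup_marks_of_splitStep hstep ih
  have hpair : ∀ (α β γ : List (Letter A B)) (P : B) (b₁ b₂ : Bool),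
      T = α ++ .inr (P, b₁) :: β ++ .inr (P, b₂) :: γ →
      (Even (β.countP fun l => l.isLeft) ↔ b₁ ≠ b₂) := by
    rintro α β γ P b₁ b₂ rfl
    exact Splitting.even_countP_isLeft_iff_of_nodup_marks hinv
  refine ⟨hpair, fun hsplit α β γ P b₁ b₂ hT => (hpair α β γ P b₁ b₂ hT).1 ?_⟩
  have hβ : β.countP (fun l => l.isLeft) = 0 := by
    refine List.countP_eq_zero.2 fun l hl => ?_
    simpa using hsplit l (by simp [hT, hl])
  rw [hβ]
  exact Even.zero

/-- For an evenly intersticed double occurrence word, after any sequence of splitting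
operations the invariant holds: for each pair of already-split symbols, the number of
occurrences of unsplit symbols strictly between them is even iff the pair has opposite
orientations.  In particular, in a fully split word every split pair has opposite
orientations. -/
theorem stmt6 {A B : Type} [DecidableEq A] (S0 : List A)
    (hdouble : ∀ a ∈ S0, S0.count a = 2)
    (heven : ∀ (α β γ : List A) (a : A), S0 = α ++ a :: β ++ a :: γ → Even β.length)
    (T : List (Letter A B))
    (hT : Relation.ReflTransGen SplitStep (S0.map Sum.inl) T) :
    (∀ (α β γ : List (Letter A B)) (P : B) (b₁ b₂ : Bool),
      T = α ++ .inr (P, b₁) :: β ++ .inr (P, b₂) :: γ →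
      (Even (β.countP fun l => l.isLeft) ↔ b₁ ≠ b₂)) ∧
    ((∀ l ∈ T, l.isRight = true) →
      ∀ (α β γ : List (Letter A B)) (P : B) (b₁ b₂ : Bool),
        T = α ++ .inr (P, b₁) :: β ++ .inr (P, b₂) :: γ → b₁ ≠ b₂) :=
  stmt6_general S0 heven T hT
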